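/- Let (Y_j) be mutually independent random variables with ∑_j Y_j convergent almost surely, and let (Y'_j) be an independent copy of the sequence. If P(Y_j = Y'_j) > 0 for all j and ∑_j P(Y_j ≠ Y'_j) < ∞, then P(∑_{j=1}^∞ Y_j = ∑_{j=1}^∞ Y'_j) ≥ ∏_{j=1}^∞ P(Y_j = Y'_j) > 0, so the distribution of the sum has an atom. -/

import Mathlib

open MeasureTheory ProbabilityTheory Filter Topology

section Aux

/-- A real-valued `tsum` of a sequence of measurable functions is measurable. -/
lemma measurable_tsum_real' {Ω : Type*} {mΩ : MeasurableSpace Ω} {f : ℕ → Ω → ℝ}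
    (hf : ∀ j, Measurable (f j)) : Measurable (fun ω => ∑' j, f j ω) := by
  classical
  have hpart : ∀ n, Measurable (fun ω => ∑ i ∈ Finset.range n, f i ω) :=
    fun n => Finset.measurable_sum _ (fun i _ => hf i)
  have habs : ∀ n, Measurable (fun ω => ∑ i ∈ Finset.range n, |f i ω|) :=
    fun n => Finset.measurable_sum _ (fun i _ => (hf i).abs)
  have hSmeas : MeasurableSet {ω | Summable (fun j => f j ω)} := by
    have h1 : MeasurableSet {ω | ∃ c,
        Tendsto (fun n => ∑ i ∈ Finset.range n, |f i ω|) atTop (𝓝 c)} :=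
      measurableSet_exists_tendsto habs
    convert h1 using 1
    ext ω
    constructor
    · intro h
      exact ⟨∑' j, |f j ω|, h.abs.hasSum.tendsto_sum_nat⟩
    · rintro ⟨c, hc⟩
      refine summable_abs_iff.mp
        (summable_of_sum_range_le (c := c) (fun _ => abs_nonneg _) (fun n => ?_))
      have hmono : Monotone (fun n => ∑ i ∈ Finset.range n, |f i ω|) :=
        monotone_nat_of_le_succ (fun n => by
          rw [Finset.sum_range_succ]
          exact le_add_of_nonneg_right (abs_nonneg _))
      exact hmono.ge_of_tendsto hc n
  have key : ∀ ω, Tendsto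
      (fun n => if ω ∈ {ω | Summable (fun j => f j ω)} then
        ∑ i ∈ Finset.range n, f i ω else 0) atTop (𝓝 (∑' j, f j ω)) := by
    intro ω
    by_cases h : Summable (fun j => f j ω)
    · simp only [Set.mem_setOf_eq, if_pos h]
      exact h.hasSum.tendsto_sum_nat
    · simp only [Set.mem_setOf_eq, if_neg h, tsum_eq_zero_of_not_summable h]
      exact tendsto_const_nhds
  exact measurable_of_tendsto_metrizable
    (fun n => Measurable.ite hSmeas (hpart n) measurable_const)
    (tendsto_pi_nhds.mpr key)

/-- Weierstrass product inequality in `ℝ≥0∞`. -/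
lemma one_sub_sum_le_prod_one_sub' (t : Finset ℕ) (c : ℕ → ENNReal) :
    1 - ∑ j ∈ t, c j ≤ ∏ j ∈ t, (1 - c j) := by
  classical
  induction t using Finset.induction with
  | empty => simp
  | @insert a t ha ih =>
    rw [Finset.sum_insert ha, Finset.prod_insert ha]
    set S := ∑ j ∈ t, c j with hS
    have h1 : (1 : ENNReal) - (c a + S) = (1 - c a) - S := by
      rw [← tsub_tsub]
    rw [h1]
    by_cases hS1 : S ≤ 1
    · have h2 : (1 - c a) - S ≤ (1 - c a) * (1 - S) := by
        rw [tsub_le_iff_right]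
        calc (1 : ENNReal) - c a = (1 - c a) * ((1 - S) + S) := by
              rw [tsub_add_cancel_of_le hS1, mul_one]
          _ = (1 - c a) * (1 - S) + (1 - c a) * S := by rw [mul_add]
          _ ≤ (1 - c a) * (1 - S) + S :=
              add_le_add_right (mul_le_of_le_one_left zero_le tsub_le_self) _
      exact h2.trans (mul_le_mul_right ih _)
    · have : (1 : ENNReal) - c a - S = 0 :=
        tsub_eq_zero_of_le (le_trans tsub_le_self (le_of_not_ge hS1))
      rw [this]
      exact zero_le

end Aux

/-- With `(Y' j)` an independent copy of the mutually independent sequence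
`(Y j)` whose series converges a.s.: if `P(Y j = Y' j) > 0` for all `j` and
`∑ j, P(Y j ≠ Y' j) < ∞`, then
`P(∑ j, Y j = ∑ j, Y' j) ≥ ∏ j, P(Y j = Y' j) > 0`, so the distribution of the sum has an
atom. -/
theorem sum_has_atom_of_prod_pos
    {Ω : Type*} [MeasurableSpace Ω] (P : Measure Ω) [IsProbabilityMeasure P]
    (Y Y' : ℕ → Ω → ℝ)
    (hmeas : ∀ j, Measurable (Y j)) (hmeas' : ∀ j, Measurable (Y' j))
    (hindep : iIndepFun (Sum.elim Y Y' : ℕ ⊕ ℕ → Ω → ℝ) P)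
    (hid : ∀ j, IdentDistrib (Y j) (Y' j) P P)
    (hconv : ∀ᵐ ω ∂P, Summable fun j => Y j ω)
    (hpos : ∀ j, 0 < P {ω | Y j ω = Y' j ω})
    (hfin : (∑' j, P {ω | Y j ω ≠ Y' j ω}) < ⊤) :
    (∏' j, P {ω | Y j ω = Y' j ω}) ≤ P {ω | (∑' j, Y j ω) = (∑' j, Y' j ω)} ∧
      0 < ∏' j, P {ω | Y j ω = Y' j ω} ∧
      ∃ c : ℝ, 0 < P {ω | (∑' j, Y j ω) = c} := by
  classical
  set A : ℕ → Set Ω := fun j => {ω | Y j ω = Y' j ω} with hA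
  set p : ℕ → ENNReal := fun j => P (A j) with hp
  set m : ℕ ⊕ ℕ → MeasurableSpace Ω :=
    fun i => MeasurableSpace.comap (Sum.elim Y Y' i) inferInstance with hm
  have h_le : ∀ i, m i ≤ ‹MeasurableSpace Ω› := by
    rintro (j | j)
    · exact (hmeas j).comap_le
    · exact (hmeas' j).comap_le
  have hA_meas : ∀ j, MeasurableSet (A j) :=
    fun j => measurableSet_eq_fun (hmeas j) (hmeas' j)
  -- measurability of A j with respect to block σ-algebras
  have hA_block : ∀ (j : ℕ) (M : MeasurableSpace Ω),
      m (Sum.inl j) ≤ M → m (Sum.inr j) ≤ M → MeasurableSet[M] (A j) := by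
    intro j M h1 h2
    have hY : Measurable[M] (Y j) := Measurable.of_comap_le h1
    have hY' : Measurable[M] (Y' j) := Measurable.of_comap_le h2
    exact measurableSet_eq_fun hY hY'
  -- finite intersections
  have hfin_prod : ∀ s : Finset ℕ, P (⋂ j ∈ s, A j) = ∏ j ∈ s, p j := by
    intro s
    induction s using Finset.induction with
    | empty => simp
    | @insert a t ha ih =>
      have hdisj : Disjoint ({Sum.inl a, Sum.inr a} : Set (ℕ ⊕ ℕ))
          ((Sum.inl '' ↑t) ∪ (Sum.inr '' ↑t)) := by
        rw [Set.disjoint_left]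
        rintro x (rfl | rfl) hx
        · rcases hx with ⟨b, hb, hb'⟩ | ⟨b, hb, hb'⟩
          · cases hb'; exact ha hb
          · exact Sum.inr_ne_inl hb'
        · rcases hx with ⟨b, hb, hb'⟩ | ⟨b, hb, hb'⟩
          · exact Sum.inl_ne_inr hb'
          · cases hb'; exact ha hb
      have hIndep : Indep (⨆ i ∈ ({Sum.inl a, Sum.inr a} : Set (ℕ ⊕ ℕ)), m i)
          (⨆ i ∈ ((Sum.inl '' ↑t) ∪ (Sum.inr '' ↑t) : Set (ℕ ⊕ ℕ)), m i) P :=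
        indep_iSup_of_disjoint h_le hindep.iIndep hdisj
      have hAa : MeasurableSet[⨆ i ∈ ({Sum.inl a, Sum.inr a} : Set (ℕ ⊕ ℕ)), m i] (A a) := by
        refine hA_block a _ ?_ ?_
        · exact le_biSup m (by simp)
        · exact le_biSup m (by simp)
      have hAt : MeasurableSet[⨆ i ∈ ((Sum.inl '' ↑t) ∪ (Sum.inr '' ↑t) : Set (ℕ ⊕ ℕ)), m i]
          (⋂ j ∈ t, A j) := by
        refine MeasurableSet.biInter t.countable_toSet (fun j hj => ?_)
        refine hA_block j _ ?_ ?_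
        · exact le_biSup m (Set.mem_union_left _ ⟨j, hj, rfl⟩)
        · exact le_biSup m (Set.mem_union_right _ ⟨j, hj, rfl⟩)
      have hmul := (hIndep.indepSet_of_measurableSet hAa hAt).measure_inter_eq_mul (μ := P)
      rw [Finset.set_biInter_insert, Finset.prod_insert ha, ← ih, hmul]
  -- the measure of the countable intersection as a limit
  set L := P (⋂ j, A j) with hL
  have hInterEq : (⋂ n, ⋂ j ∈ Finset.range n, A j) = ⋂ j, A j := by
    ext ω
    simp only [Set.mem_iInter, Finset.mem_range]
    exact ⟨fun h j => h (j + 1) j (Nat.lt_succ_self j), fun h n j _ => h j⟩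
  have htendsto : Tendsto (fun n => P (⋂ j ∈ Finset.range n, A j)) atTop (𝓝 L) := by
    have := tendsto_measure_iInter_atTop (μ := P)
      (s := fun n => ⋂ j ∈ Finset.range n, A j)
      (fun n => (MeasurableSet.biInter (Finset.range n).countable_toSet
        (fun j _ => hA_meas j)).nullMeasurableSet)
      (fun n k hnk => Set.biInter_subset_biInter_left (fun j hj =>
        Finset.mem_range.mpr (lt_of_lt_of_le (Finset.mem_range.mp hj) hnk)))
      ⟨0, measure_ne_top _ _⟩
    rwa [hInterEq] at this
  have hple : ∀ j, p j ≤ 1 := fun j => prob_le_one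
  have hanti : ∀ s t : Finset ℕ, s ⊆ t → ∏ j ∈ t, p j ≤ ∏ j ∈ s, p j := by
    intro s t h
    rw [← Finset.prod_sdiff h]
    exact mul_le_of_le_one_left' (Finset.prod_le_one' (fun i _ => hple i))
  have hHasProd : HasProd p (⨅ s : Finset ℕ, ∏ j ∈ s, p j) :=
    tendsto_atTop_iInf (fun s t hst => hanti s t hst)
  have hiInf_eq : (⨅ s : Finset ℕ, ∏ j ∈ s, p j) = L := by
    apply le_antisymm
    · have h1 : Tendsto (fun n => ∏ j ∈ Finset.range n, p j) atTop (𝓝 L) := by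
        simpa only [hfin_prod] using htendsto
      exact ge_of_tendsto h1 (Eventually.of_forall fun n =>
        iInf_le (fun s : Finset ℕ => ∏ j ∈ s, p j) (Finset.range n))
    · refine le_iInf fun s => ?_
      rw [← hfin_prod s]
      exact measure_mono (fun ω hω => by
        simp only [Set.mem_iInter] at hω ⊢
        exact fun j _ => hω j)
  have htprod : (∏' j, p j) = L := by
    rw [hHasProd.tprod_eq, hiInf_eq]
  -- positivity
  set c : ℕ → ENNReal := fun j => P ((A j)ᶜ) with hc
  have hc_eq : ∀ j, P {ω | Y j ω ≠ Y' j ω} = c j := fun j => rfl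
  have hp_eq : ∀ j, p j = 1 - c j := by
    intro j
    rw [hp, hc, ← prob_compl_eq_one_sub (hA_meas j).compl, compl_compl]
  have hcfin : (∑' j, c j) ≠ ⊤ := by
    rw [← tsum_congr hc_eq]
    exact hfin.ne
  obtain ⟨N, hN⟩ : ∃ N, (∑' k, c (k + N)) < 1 / 2 :=
    ((ENNReal.tendsto_sum_nat_add c hcfin).eventually
      (gt_mem_nhds (by norm_num : (0 : ENNReal) < 1 / 2))).exists
  have hprodN_pos : 0 < ∏ j ∈ Finset.range N, p j :=
    CanonicallyOrderedAdd.prod_pos.mpr (fun j _ => hpos j)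
  set ε : ENNReal := (∏ j ∈ Finset.range N, p j) * (1 / 2) with hε
  have hε_pos : 0 < ε :=
    ENNReal.mul_pos hprodN_pos.ne' (by norm_num)
  have hlow : ∀ s : Finset ℕ, ε ≤ ∏ j ∈ s, p j := by
    intro s
    have h1 : ∏ j ∈ Finset.range N ∪ s, p j ≤ ∏ j ∈ s, p j :=
      hanti s (Finset.range N ∪ s) Finset.subset_union_right
    have h2 : ∏ j ∈ Finset.range N ∪ s, p j
        = (∏ j ∈ Finset.range N, p j) * ∏ j ∈ s \ Finset.range N, p j := by
      rw [← Finset.prod_union Finset.disjoint_sdiff, Finset.union_sdiff_self_eq_union]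
    have htail : ∑ j ∈ s \ Finset.range N, c j ≤ ∑' k, c (k + N) := by
      have himg : ∑ j ∈ s \ Finset.range N, c j
          = ∑ k ∈ (s \ Finset.range N).image (· - N), c (k + N) := by
        rw [Finset.sum_image]
        · refine Finset.sum_congr rfl (fun j hj => ?_)
          have hjN : N ≤ j := by
            have := Finset.mem_sdiff.mp hj
            simpa using this.2
          rw [Nat.sub_add_cancel hjN]
        · intro j1 h1 j2 h2 he
          have hj1 : N ≤ j1 := by
            have := Finset.mem_sdiff.mp h1; simpa using this.2
          have hj2 : N ≤ j2 := by
            have := Finset.mem_sdiff.mp h2; simpa using this.2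
          simp only at he
          omega
      rw [himg]
      exact ENNReal.sum_le_tsum _
    have h3 : (1 : ENNReal) - 1 / 2 ≤ ∏ j ∈ s \ Finset.range N, p j := by
      calc (1 : ENNReal) - 1 / 2 ≤ 1 - ∑ j ∈ s \ Finset.range N, c j :=
            tsub_le_tsub_left (htail.trans hN.le) 1
        _ ≤ ∏ j ∈ s \ Finset.range N, (1 - c j) := one_sub_sum_le_prod_one_sub' _ _
        _ = ∏ j ∈ s \ Finset.range N, p j := by
            exact Finset.prod_congr rfl (fun j _ => (hp_eq j).symm)
    have h4 : (1 : ENNReal) - 1 / 2 = 1 / 2 := by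
      rw [one_div, ENNReal.one_sub_inv_two]
    calc ε = (∏ j ∈ Finset.range N, p j) * (1 / 2) := rfl
      _ ≤ (∏ j ∈ Finset.range N, p j) * ∏ j ∈ s \ Finset.range N, p j := by
          rw [h4] at h3
          exact mul_le_mul_right h3 _
      _ = ∏ j ∈ Finset.range N ∪ s, p j := h2.symm
      _ ≤ ∏ j ∈ s, p j := h1
  have htprod_pos : 0 < ∏' j, p j := by
    rw [hHasProd.tprod_eq]
    exact lt_of_lt_of_le hε_pos (le_iInf hlow)
  -- first inequality
  have hsubset : (⋂ j, A j) ⊆ {ω | (∑' j, Y j ω) = (∑' j, Y' j ω)} := by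
    intro ω hω
    exact tsum_congr (fun j => Set.mem_iInter.mp hω j)
  have hineq : (∏' j, p j) ≤ P {ω | (∑' j, Y j ω) = (∑' j, Y' j ω)} := by
    rw [htprod, hL]
    exact measure_mono hsubset
  refine ⟨hineq, htprod_pos, ?_⟩
  -- atom
  by_contra hno
  push_neg at hno
  have hzero : ∀ y : ℝ, P {ω | (∑' j, Y j ω) = y} = 0 :=
    fun y => le_antisymm (hno y) zero_le
  set S : Ω → ℝ := fun ω => ∑' j, Y j ω with hSdef
  set S' : Ω → ℝ := fun ω => ∑' j, Y' j ω with hS'def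
  have hS : Measurable S := measurable_tsum_real' hmeas
  have hS' : Measurable S' := measurable_tsum_real' hmeas'
  -- independence of S and S'
  have hdisj : Disjoint (Set.range (Sum.inl : ℕ → ℕ ⊕ ℕ)) (Set.range (Sum.inr : ℕ → ℕ ⊕ ℕ)) := by
    rw [Set.disjoint_left]
    rintro x ⟨a, rfl⟩ ⟨b, hb⟩
    exact Sum.inr_ne_inl hb
  have hIndep12 : Indep (⨆ i ∈ Set.range (Sum.inl : ℕ → ℕ ⊕ ℕ), m i)
      (⨆ i ∈ Set.range (Sum.inr : ℕ → ℕ ⊕ ℕ), m i) P :=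
    indep_iSup_of_disjoint h_le hindep.iIndep hdisj
  have hSM : Measurable[⨆ i ∈ Set.range (Sum.inl : ℕ → ℕ ⊕ ℕ), m i] S := by
    refine measurable_tsum_real' (fun j => ?_)
    have hle : m (Sum.inl j) ≤ ⨆ i ∈ Set.range (Sum.inl : ℕ → ℕ ⊕ ℕ), m i :=
      le_biSup m ⟨j, rfl⟩
    exact Measurable.of_comap_le hle
  have hS'M : Measurable[⨆ i ∈ Set.range (Sum.inr : ℕ → ℕ ⊕ ℕ), m i] S' := by
    refine measurable_tsum_real' (fun j => ?_)
    have hle : m (Sum.inr j) ≤ ⨆ i ∈ Set.range (Sum.inr : ℕ → ℕ ⊕ ℕ), m i :=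
      le_biSup m ⟨j, rfl⟩
    exact Measurable.of_comap_le hle
  have hIndepSS' : IndepFun S S' P := by
    exact indep_of_indep_of_le_left (indep_of_indep_of_le_right hIndep12 hS'M.comap_le)
      hSM.comap_le
  have hmap := (indepFun_iff_map_prod_eq_prod_map_map hS.aemeasurable hS'.aemeasurable).mp
    hIndepSS'
  have hDmeas : MeasurableSet {q : ℝ × ℝ | q.1 = q.2} :=
    measurableSet_eq_fun measurable_fst measurable_snd
  haveI : IsProbabilityMeasure (P.map S') := Measure.isProbabilityMeasure_map hS'.aemeasurable
  have hkey : P {ω | S ω = S' ω} = ((P.map S).prod (P.map S')) {q : ℝ × ℝ | q.1 = q.2} := by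
    rw [← hmap, Measure.map_apply (hS.prodMk hS') hDmeas]
    rfl
  rw [Measure.prod_apply_symm hDmeas] at hkey
  have hslice : ∀ y : ℝ, ((fun x => (x, y)) ⁻¹' {q : ℝ × ℝ | q.1 = q.2}) = {y} := by
    intro y
    ext x
    simp [Set.mem_preimage]
  have hz : ∀ y : ℝ, (P.map S) {y} = 0 := by
    intro y
    rw [Measure.map_apply hS (measurableSet_singleton y)]
    exact hzero y
  have : P {ω | S ω = S' ω} = 0 := by
    rw [hkey]
    simp only [hslice, hz]
    simp
  exact absurd (lt_of_lt_of_le htprod_pos (hineq.trans_eq (by rfl))) (by rw [this]; simp)
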